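/- Let (d_i)_{i≥1} be a sequence over a finite alphabet A = {0,1,…,d} ⊆ ℕ such that for every k ≥ 1, (d_i)_{i≥1} ≺ (d_{k+i})_{i≥1} strictly in the alternate order (i.e. (d_i) is strictly smaller than all of its proper shifts). Then (d_i)_{i≥1} ⪯ φ^∞(1). In other words, φ^∞(1) is the greatest non-periodic alternate Lyndon word with respect to the alternate order. -/

import Mathlib

open Filter Topology

/-- Alternate (Ito–Sadahiro) strict order on infinite sequences (0-indexed: entry `i`
is the `(i+1)`-th letter `x_{i+1}` of the paper). `altLt x y` iff at the first index
where they differ the comparison alternates with the parity of the index: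
`(-1)^k (x_k - y_k) < 0` in 1-based indexing. -/
def altLt (x y : ℕ → ℕ) : Prop :=
  ∃ k : ℕ, (∀ i < k, x i = y i) ∧ (if Even k then y k < x k else x k < y k)

def altLe (x y : ℕ → ℕ) : Prop := x = y ∨ altLt x y

def shiftSeq (x : ℕ → ℕ) (k : ℕ) : ℕ → ℕ := fun i => x (k + i)

/-- An alternate Lyndon word: smaller (in the alternate order) than all of its shifts. -/
def IsAltLyndon (d : ℕ → ℕ) : Prop := ∀ k : ℕ, altLe d (shiftSeq d k)

/-- The Lyndon system associated to `d`: sequences over the alphabet `{0, …, d_1}`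
all of whose shifts dominate `d` in the alternate order. -/
def LyndonSystem (d : ℕ → ℕ) : Set (ℕ → ℕ) :=
  {x | (∀ i, x i ≤ d 0) ∧ ∀ k : ℕ, altLe d (shiftSeq x k)}

def IsFactorOf (w : List ℕ) (x : ℕ → ℕ) : Prop :=
  ∃ k : ℕ, w = (List.range w.length).map (fun i => x (k + i))

/-- The language of the Lyndon system: finite factors of its elements. -/
def LyndonLang (d : ℕ → ℕ) : Set (List ℕ) :=
  {w | ∃ x ∈ LyndonSystem d, IsFactorOf w x}

/-- `Hword d n` is the number of words of length `n` in the language `L_M`. -/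
noncomputable def Hword (d : ℕ → ℕ) (n : ℕ) : ℕ :=
  Set.ncard {w : List ℕ | w ∈ LyndonLang d ∧ w.length = n}

/-- The topological entropy of the Lyndon system of `d` equals `h`,
i.e. `lim_{n→∞} (log H_n)/n = h`. -/
def EntropyIs (d : ℕ → ℕ) (h : ℝ) : Prop :=
  Filter.Tendsto (fun n : ℕ => Real.log (Hword d n) / n) Filter.atTop (nhds h)

/-- The substitution `φ` on letters: `φ(0) = 1`, `φ(1) = 100`. -/
def phiL (a : ℕ) : List ℕ := if a = 0 then [1] else [1, 0, 0]
/-- `φ` extended to words. -/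
def phiW (w : List ℕ) : List ℕ := w.flatMap phiL
/-- `uW n = φ^n(1)`. -/
def uW (n : ℕ) : List ℕ := phiW^[n] [1]
/-- The infinite fixed point `φ^∞(1)` (each `uW n` is a prefix of `uW (n+1)`,
and `|uW (i+1)| > i`, so the definition below gives the limit word). -/
def phiInf : ℕ → ℕ := fun i => (uW (i + 1)).getD i 0

/-!
If `d₁ ≥ 2`, then `d ≺ φ^∞(1)` already at the first letter. Otherwise every letter is at most
`d₁ = 1`, and we show that `φ^∞(1) ≺ d` is impossible by descent on the index of the first
difference. The substitution `φ` is strictly monotone on binary sequences: its blocks have odd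
length, and the letter following the start of a block is `0` for `φ(1) = 100` but `1` for
`φ(0) = 1` (the next block starts with `1`), so a first difference at index `m` becomes one at
`|φ(e₀ ⋯ e_{m-1})| + 1`, with the same orientation. If `φ^∞(1) ≺ d`, then `d` begins with `1001`,
and comparing `d` with its shifts shows that after `10` comes `0` and after `100` comes `1`; hence
`d = φ(e)` for a binary `e` that is again strictly smaller than its proper shifts. As
`φ(φ^∞(1)) = φ^∞(1)`, monotonicity turns `φ^∞(1) ≺ d` into `φ^∞(1) ≺ e` with a smaller index of
first difference.
-/

def AltLtAt (x y : ℕ → ℕ) (k : ℕ) : Prop :=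
  (∀ i < k, x i = y i) ∧ if Even k then y k < x k else x k < y k

def IsStrictAltLyndon (d : ℕ → ℕ) : Prop := ∀ k, 1 ≤ k → altLt d (shiftSeq d k)

section AltOrder

variable {x y : ℕ → ℕ}

lemma AltLtAt.index_unique {k k' : ℕ} (h : AltLtAt x y k) (h' : AltLtAt x y k') : k = k' := by
  obtain ⟨h1, h2⟩ := h
  obtain ⟨h1', h2'⟩ := h'
  rcases lt_trichotomy k k' with hl | he | hl
  · have := h1' k hl; split_ifs at h2 <;> omega
  · exact he
  · have := h1 k' hl; split_ifs at h2' <;> omega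

lemma AltLtAt.not_altLt_swap {k : ℕ} (h : AltLtAt x y k) : ¬ altLt y x := by
  rintro ⟨k', h1', h2'⟩
  obtain ⟨h1, h2⟩ := h
  rcases lt_trichotomy k k' with hl | rfl | hl
  · have := h1' k hl; split_ifs at h2 <;> omega
  · split_ifs at h2 h2' <;> omega
  · have := h1 k' hl; split_ifs at h2' <;> omega

lemma altLt_asymm (h : altLt x y) : ¬ altLt y x :=
  let ⟨_, hk⟩ := h
  AltLtAt.not_altLt_swap hk

lemma altLt_irrefl (x : ℕ → ℕ) : ¬ altLt x x := fun h => altLt_asymm h h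

lemma altLt_trichotomy (x y : ℕ → ℕ) : x = y ∨ altLt x y ∨ altLt y x := by
  by_cases hxy : x = y
  · exact .inl hxy
  classical
  have hex : ∃ n, x n ≠ y n := by simpa [funext_iff] using hxy
  set k := Nat.find hex
  have heq : ∀ i < k, x i = y i := fun i hi => not_not.1 (Nat.find_min hex hi)
  have hne : x k ≠ y k := Nat.find_spec hex
  right
  by_cases hk : Even k <;> rcases Nat.lt_or_gt_of_ne hne with hlt | hlt
  · exact .inr ⟨k, fun i hi => (heq i hi).symm, by rwa [if_pos hk]⟩
  · exact .inl ⟨k, heq, by rwa [if_pos hk]⟩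
  · exact .inl ⟨k, heq, by rwa [if_neg hk]⟩
  · exact .inr ⟨k, fun i hi => (heq i hi).symm, by rwa [if_neg hk]⟩

end AltOrder

section Substitution

lemma length_phiL (a : ℕ) : a = 0 ∧ (phiL a).length = 1 ∨ a ≠ 0 ∧ (phiL a).length = 3 := by
  by_cases h : a = 0 <;> simp [phiL, h]

lemma length_phiL_pos (a : ℕ) : 0 < (phiL a).length := by
  rcases length_phiL a with ⟨-, h⟩ | ⟨-, h⟩ <;> omega

lemma phiL_getD_zero (a : ℕ) : (phiL a).getD 0 0 = 1 := by
  by_cases h : a = 0 <;> simp [phiL, h]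

def blockStart (e : ℕ → ℕ) : ℕ → ℕ
  | 0 => 0
  | m + 1 => blockStart e m + (phiL (e m)).length

/-- Position `i` of `φ(e)` is position `r` of the block `φ(e m)`, which starts at
`blockStart e m`, where `(m, r) = blockOf e i`. -/
def blockOf (e : ℕ → ℕ) : ℕ → ℕ × ℕ
  | 0 => (0, 0)
  | i + 1 =>
    if (blockOf e i).2 + 1 < (phiL (e (blockOf e i).1)).length then
      ((blockOf e i).1, (blockOf e i).2 + 1)
    else ((blockOf e i).1 + 1, 0)

def phiSeq (e : ℕ → ℕ) (i : ℕ) : ℕ := (phiL (e (blockOf e i).1)).getD (blockOf e i).2 0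

variable (e : ℕ → ℕ)

lemma blockStart_succ (m : ℕ) : blockStart e (m + 1) = blockStart e m + (phiL (e m)).length :=
  rfl

lemma blockStart_strictMono : StrictMono (blockStart e) :=
  strictMono_nat_of_lt_succ fun m => by simp [blockStart_succ, length_phiL_pos]

lemma le_blockStart (m : ℕ) : m ≤ blockStart e m := (blockStart_strictMono e).id_le m

lemma blockStart_mod_two (m : ℕ) : blockStart e m % 2 = m % 2 := by
  induction m with
  | zero => rfl
  | succ n ih =>
    rcases length_phiL (e n) with ⟨-, h⟩ | ⟨-, h⟩ <;> simp [blockStart_succ, h] <;> omega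

lemma blockOf_spec (i : ℕ) :
    blockStart e (blockOf e i).1 + (blockOf e i).2 = i ∧
      (blockOf e i).2 < (phiL (e (blockOf e i).1)).length := by
  induction i with
  | zero => exact ⟨rfl, length_phiL_pos _⟩
  | succ n ih =>
    rw [blockOf]
    split_ifs with hc
    · exact ⟨by dsimp only; omega, hc⟩
    · exact ⟨by dsimp only; rw [blockStart_succ]; omega, length_phiL_pos _⟩

lemma blockOf_blockStart_add {m r : ℕ} (hr : r < (phiL (e m)).length) :
    blockOf e (blockStart e m + r) = (m, r) := by
  obtain ⟨h1, h2⟩ := blockOf_spec e (blockStart e m + r)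
  set m' := (blockOf e (blockStart e m + r)).1
  have hm : m' = m := by
    by_contra hne
    rcases Nat.lt_or_gt_of_ne hne with hl | hl <;>
    · have := (blockStart_strictMono e).monotone (Nat.succ_le_of_lt hl)
      rw [blockStart_succ] at this
      omega
  rw [hm] at h1
  exact Prod.ext hm (by omega)

lemma phiSeq_blockStart_add {m r : ℕ} (hr : r < (phiL (e m)).length) :
    phiSeq e (blockStart e m + r) = (phiL (e m)).getD r 0 := by
  rw [phiSeq, blockOf_blockStart_add e hr]

lemma phiSeq_blockStart (m : ℕ) : phiSeq e (blockStart e m) = 1 := by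
  have := phiSeq_blockStart_add e (length_phiL_pos (e m))
  rwa [add_zero, phiL_getD_zero] at this

lemma phiSeq_blockStart_add_one (m : ℕ) :
    phiSeq e (blockStart e m + 1) = if e m = 0 then 1 else 0 := by
  rcases length_phiL (e m) with ⟨h0, h⟩ | ⟨h0, h⟩
  · have hs : blockStart e m + 1 = blockStart e (m + 1) := by rw [blockStart_succ, h]
    rw [if_pos h0, hs, phiSeq_blockStart]
  · rw [if_neg h0, phiSeq_blockStart_add e (by omega : 1 < _)]
    simp [phiL, h0]

lemma blockStart_shift (k m : ℕ) :
    blockStart e (k + m) = blockStart e k + blockStart (shiftSeq e k) m := by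
  induction m with
  | zero => rfl
  | succ n ih => rw [← add_assoc, blockStart_succ, blockStart_succ, ih, add_assoc]; rfl

lemma phiSeq_shift (k i : ℕ) : phiSeq (shiftSeq e k) i = phiSeq e (blockStart e k + i) := by
  obtain ⟨h1, h2⟩ := blockOf_spec (shiftSeq e k) i
  rw [← h1, ← add_assoc, ← blockStart_shift, phiSeq_blockStart_add _ h2,
    phiSeq_blockStart_add e h2]
  rfl

variable {e}

lemma blockStart_congr {a b : ℕ → ℕ} {m : ℕ} (h : ∀ j < m, a j = b j) :
    blockStart a m = blockStart b m := by
  induction m with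
  | zero => rfl
  | succ n ih =>
    rw [blockStart_succ, blockStart_succ, ih (fun j hj => h j (by omega)), h n (by omega)]

lemma phiSeq_congr {a b : ℕ → ℕ} {m : ℕ} (h : ∀ j < m, a j = b j) {i : ℕ}
    (hi : i ≤ blockStart a m) : phiSeq a i = phiSeq b i := by
  obtain ⟨h1, h2⟩ := blockOf_spec a i
  set m' := (blockOf a i).1
  rcases Nat.lt_or_ge m' m with hl | hg
  · have hstart := blockStart_congr fun j (hj : j < m') => h j (hj.trans hl)
    rw [← h1, phiSeq_blockStart_add a h2, hstart, phiSeq_blockStart_add b (h m' hl ▸ h2), h m' hl]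
  · have := (blockStart_strictMono a).monotone hg
    have hi : i = blockStart b m := by rw [← blockStart_congr h]; omega
    rw [hi, phiSeq_blockStart, ← blockStart_congr h, phiSeq_blockStart]

lemma AltLtAt.phiSeq {a b : ℕ → ℕ} (ha : ∀ i, a i ≤ 1) (hb : ∀ i, b i ≤ 1) {m : ℕ}
    (h : AltLtAt a b m) : AltLtAt (phiSeq a) (phiSeq b) (blockStart a m + 1) := by
  obtain ⟨h1, h2⟩ := h
  refine ⟨fun i hi => phiSeq_congr h1 (by omega), ?_⟩
  have hpar : Even (blockStart a m + 1) ↔ ¬ Even m := by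
    simp only [Nat.even_add_one, Nat.even_iff, blockStart_mod_two]
  have := ha m
  have := hb m
  have hb' := phiSeq_blockStart_add_one b m
  rw [← blockStart_congr h1] at hb'
  rw [phiSeq_blockStart_add_one, hb']
  by_cases hm : Even m
  · rw [if_pos hm] at h2
    rw [if_neg (by simpa [hpar] using hm), if_neg (by omega), if_pos (by omega)]
    omega
  · rw [if_neg hm] at h2
    rw [if_pos (hpar.2 hm), if_neg (by omega), if_pos (by omega)]
    omega

lemma altLt_phiSeq {a b : ℕ → ℕ} (ha : ∀ i, a i ≤ 1) (hb : ∀ i, b i ≤ 1) (h : altLt a b) :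
    altLt (phiSeq a) (phiSeq b) :=
  let ⟨_, hm⟩ := h
  ⟨_, AltLtAt.phiSeq ha hb hm⟩

end Substitution

section FixedPoint

lemma phiW_cons (a : ℕ) (w : List ℕ) : phiW (a :: w) = phiL a ++ phiW w := List.flatMap_cons

lemma phiW_append (w₁ w₂ : List ℕ) : phiW (w₁ ++ w₂) = phiW w₁ ++ phiW w₂ := List.flatMap_append

lemma phiW_prefix {w₁ w₂ : List ℕ} (h : w₁ <+: w₂) : phiW w₁ <+: phiW w₂ := by
  obtain ⟨t, rfl⟩ := h
  exact ⟨phiW t, (phiW_append _ _).symm⟩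

lemma phiW_singleton (a : ℕ) : phiW [a] = phiL a := by simp [phiW]

lemma length_le_length_phiW (w : List ℕ) : w.length ≤ (phiW w).length := by
  induction w with
  | nil => simp [phiW]
  | cons a t ih =>
    simp only [phiW_cons, List.length_append, List.length_cons]
    have := length_phiL_pos a
    omega

lemma uW_succ (n : ℕ) : uW (n + 1) = phiW (uW n) := Function.iterate_succ_apply' _ _ _

lemma uW_prefix_uW_succ (n : ℕ) : uW n <+: uW (n + 1) := by
  induction n with
  | zero => exact ⟨[0, 0], rfl⟩
  | succ n ih => rw [uW_succ, uW_succ (n + 1)]; exact phiW_prefix ih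

lemma uW_prefix {m n : ℕ} (h : m ≤ n) : uW m <+: uW n := by
  induction n, h using Nat.le_induction with
  | base => exact List.prefix_refl _
  | succ n _ ih => exact ih.trans (uW_prefix_uW_succ n)

lemma lt_length_uW (n : ℕ) : n < (uW n).length := by
  induction n with
  | zero => simp [uW]
  | succ n ih =>
    obtain ⟨t, ht⟩ := uW_prefix (Nat.zero_le n)
    have := length_le_length_phiW t
    rw [uW_succ, ← ht]
    rw [← ht] at ih
    simp [uW, phiW_cons, phiL] at ih ⊢
    omega

lemma getD_uW {n i : ℕ} (hi : i < (uW n).length) : (uW n).getD i 0 = phiInf i := by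
  have hi' : i < (uW (i + 1)).length := (lt_length_uW (i + 1)).trans' (by omega)
  change _ = (uW (i + 1)).getD i 0
  rw [List.getD_eq_getElem _ _ hi, List.getD_eq_getElem _ _ hi']
  rcases le_total n (i + 1) with h | h
  · exact (uW_prefix h).getElem hi
  · exact ((uW_prefix h).getElem hi').symm

lemma phiInf_le_one (i : ℕ) : phiInf i ≤ 1 := by
  have hmem : ∀ n, ∀ x ∈ uW n, x ≤ 1 := by
    intro n
    induction n with
    | zero => simp [uW]
    | succ k ih =>
      intro x hx
      rw [uW_succ] at hx
      obtain ⟨a, -, hxa⟩ := List.mem_flatMap.1 hx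
      by_cases h : a = 0 <;> simp [phiL, h] at hxa <;> omega
  have hi : i < (uW (i + 1)).length := (lt_length_uW (i + 1)).trans' (by omega)
  rw [← getD_uW hi, List.getD_eq_getElem _ _ hi]
  exact hmem _ _ (List.getElem_mem _)

lemma phiInf_zero : phiInf 0 = 1 := by decide
lemma phiInf_one : phiInf 1 = 0 := by decide
lemma phiInf_two : phiInf 2 = 0 := by decide
lemma phiInf_three : phiInf 3 = 1 := by decide

lemma phiW_map_range (e : ℕ → ℕ) (m : ℕ) :
    phiW ((List.range m).map e) = (List.range (blockStart e m)).map (phiSeq e) := by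
  induction m with
  | zero => rfl
  | succ m ih =>
    rw [List.range_succ, List.map_append, phiW_append, ih, blockStart_succ, List.range_add,
      List.map_append, List.map_map, List.map_singleton, phiW_singleton]
    congr 1
    apply List.ext_getElem (by simp)
    intro r hr _
    rw [List.getElem_map, List.getElem_range, Function.comp_apply, phiSeq_blockStart_add e hr,
      List.getD_eq_getElem _ _ hr]

lemma map_range_phiInf_prefix (m : ℕ) : (List.range m).map phiInf <+: uW m := by
  rw [List.prefix_iff_eq_take]
  have hm := lt_length_uW m
  apply List.ext_getElem (by simp; omega)
  intro i hi _
  simp only [List.length_map, List.length_range] at hi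
  rw [List.getElem_map, List.getElem_range, List.getElem_take, ← getD_uW (n := m) (by omega),
    List.getD_eq_getElem]

lemma phiSeq_phiInf : phiSeq phiInf = phiInf := by
  funext i
  have hpre : (List.range (blockStart phiInf (i + 1))).map (phiSeq phiInf) <+: uW (i + 2) := by
    rw [← phiW_map_range, uW_succ]
    exact phiW_prefix (map_range_phiInf_prefix _)
  have hi : i < blockStart phiInf (i + 1) := le_blockStart phiInf (i + 1)
  have := hpre.getElem (by simpa using hi)
  rw [List.getElem_map, List.getElem_range] at this
  rw [this, ← List.getD_eq_getElem _ 0, getD_uW ((lt_length_uW _).trans' (by omega))]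

end FixedPoint

namespace IsStrictAltLyndon

variable {d : ℕ → ℕ}

lemma not_altLtAt_shift (hd : IsStrictAltLyndon d) {q : ℕ} (hq : 1 ≤ q) {j : ℕ} :
    ¬ AltLtAt (shiftSeq d q) d j :=
  fun h => h.not_altLt_swap (hd q hq)

lemma le_head (hd : IsStrictAltLyndon d) (i : ℕ) : d i ≤ d 0 := by
  rcases Nat.eq_zero_or_pos i with rfl | hi
  · exact le_rfl
  by_contra h
  exact hd.not_altLtAt_shift hi ⟨fun _ h => absurd h (Nat.not_lt_zero _), by simp [shiftSeq]; omega⟩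

lemma head_pos (hd : IsStrictAltLyndon d) : 0 < d 0 := by
  by_contra h
  have hz : shiftSeq d 1 = d := funext fun i => by
    have := hd.le_head (1 + i)
    have := hd.le_head i
    simp only [shiftSeq]
    omega
  have := hd 1 le_rfl
  rw [hz] at this
  exact altLt_irrefl d this

lemma head_eq_one (hd : IsStrictAltLyndon d) (hb : ∀ i, d i ≤ 1) : d 0 = 1 := by
  have := hd.head_pos
  have := hb 0
  omega

lemma apply_one_eq_zero (hd : IsStrictAltLyndon d) (hb : ∀ i, d i ≤ 1) : d 1 = 0 := by
  have h0 := hd.head_eq_one hb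
  by_contra h1
  have hall : ∀ n, d n = 1 := by
    intro n
    induction n with
    | zero => exact h0
    | succ n ih =>
      by_contra hn
      have := hb 1
      have := hb (n + 1)
      rcases Nat.eq_zero_or_pos n with rfl | hn0
      · rw [zero_add] at hn; omega
      · refine hd.not_altLtAt_shift hn0 (j := 1) ⟨fun i hi => ?_, ?_⟩
        · simp [shiftSeq, Nat.lt_one_iff.1 hi, ih, h0]
        · simp [shiftSeq]; omega
  have hz : shiftSeq d 1 = d := funext fun i => by simp [shiftSeq, hall]
  have := hd 1 le_rfl
  rw [hz] at this
  exact altLt_irrefl d this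

lemma apply_add_two_eq_zero (hd : IsStrictAltLyndon d) (hb : ∀ i, d i ≤ 1) (h2 : d 2 = 0)
    {q : ℕ} (hq : d q = 1) (hq1 : d (q + 1) = 0) : d (q + 2) = 0 := by
  rcases Nat.eq_zero_or_pos q with rfl | hq0
  · exact h2
  by_contra h
  have := hb (q + 2)
  refine hd.not_altLtAt_shift hq0 (j := 2) ⟨fun i hi => ?_, ?_⟩
  · interval_cases i <;> simp [shiftSeq, hq, hq1, hd.head_eq_one hb, hd.apply_one_eq_zero hb]
  · simp [shiftSeq]; omega

lemma apply_add_three_eq_one (hd : IsStrictAltLyndon d) (hb : ∀ i, d i ≤ 1) (h2 : d 2 = 0)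
    (h3 : d 3 = 1) {q : ℕ} (hq : d q = 1) (hq1 : d (q + 1) = 0) : d (q + 3) = 1 := by
  rcases Nat.eq_zero_or_pos q with rfl | hq0
  · exact h3
  by_contra h
  have := hb (q + 3)
  have hq2 := hd.apply_add_two_eq_zero hb h2 hq hq1
  refine hd.not_altLtAt_shift hq0 (j := 3) ⟨fun i hi => ?_, ?_⟩
  · interval_cases i <;>
      simp [shiftSeq, hq, hq1, hq2, h2, hd.head_eq_one hb, hd.apply_one_eq_zero hb]
  · simp [shiftSeq, Nat.even_iff]; omega

end IsStrictAltLyndon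

section Desubstitution

/-- Cuts `d` into blocks `100` (read as the letter `1`) and `1` (read as `0`), according to the
letter following the leading `1` of the block; `desubstPos d m` is where the `m`-th block starts. -/
def desubstPos (d : ℕ → ℕ) : ℕ → ℕ
  | 0 => 0
  | m + 1 => desubstPos d m + if d (desubstPos d m + 1) = 0 then 3 else 1

def desubst (d : ℕ → ℕ) (m : ℕ) : ℕ := if d (desubstPos d m + 1) = 0 then 1 else 0

variable {d : ℕ → ℕ}

lemma desubst_le_one (d : ℕ → ℕ) (m : ℕ) : desubst d m ≤ 1 := by
  unfold desubst; split_ifs <;> omega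

lemma blockStart_desubst (d : ℕ → ℕ) (m : ℕ) : blockStart (desubst d) m = desubstPos d m := by
  induction m with
  | zero => rfl
  | succ m ih => rw [blockStart_succ, ih, desubstPos]; unfold desubst; split_ifs <;> rfl

lemma phiSeq_desubst (hb : ∀ i, d i ≤ 1) (h0 : d 0 = 1)
    (h100 : ∀ q, d q = 1 → d (q + 1) = 0 → d (q + 2) = 0 ∧ d (q + 3) = 1) :
    phiSeq (desubst d) = d := by
  have hstart : ∀ m, d (desubstPos d m) = 1 := by
    intro m
    induction m with
    | zero => exact h0
    | succ m ih =>
      rw [desubstPos]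
      split_ifs with h
      · exact (h100 _ ih h).2
      · have := hb (desubstPos d m + 1); omega
  funext i
  obtain ⟨h1, h2⟩ := blockOf_spec (desubst d) i
  set m := (blockOf (desubst d) i).1
  set r := (blockOf (desubst d) i).2
  rw [← h1, phiSeq_blockStart_add _ h2, blockStart_desubst]
  unfold desubst at h2 ⊢
  split_ifs at h2 ⊢ with h
  · simp only [phiL, one_ne_zero, if_false, List.length_cons, List.length_nil] at h2 ⊢
    interval_cases r <;> simp [hstart, h, (h100 _ (hstart m) h).1]
  · simp only [phiL, if_true, List.length_cons, List.length_nil] at h2 ⊢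
    have hr : r = 0 := by omega
    simp [hr, hstart]

end Desubstitution

lemma IsStrictAltLyndon.of_phiSeq {e : ℕ → ℕ} (he : ∀ i, e i ≤ 1)
    (hd : IsStrictAltLyndon (phiSeq e)) : IsStrictAltLyndon e := by
  intro j hj
  have hshift : shiftSeq (phiSeq e) (blockStart e j) = phiSeq (shiftSeq e j) :=
    funext fun i => (phiSeq_shift e j i).symm
  have hlt := hd _ (hj.trans (le_blockStart e j))
  rw [hshift] at hlt
  rcases altLt_trichotomy e (shiftSeq e j) with heq | hlt' | hgt
  · rw [← heq] at hlt
    exact absurd hlt (altLt_irrefl _)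
  · exact hlt'
  · exact absurd hlt (altLt_asymm (altLt_phiSeq (fun i => he _) he hgt))

namespace IsStrictAltLyndon

variable {d : ℕ → ℕ}

lemma four_le_of_altLtAt_phiInf (hd : IsStrictAltLyndon d) (hb : ∀ i, d i ≤ 1) {k : ℕ}
    (h : AltLtAt phiInf d k) : 4 ≤ k := by
  obtain ⟨-, h2⟩ := h
  have := hd.head_eq_one hb
  have := hd.apply_one_eq_zero hb
  have := hb 3
  by_contra hk
  interval_cases k <;>
    simp [Nat.even_iff, phiInf_zero, phiInf_one, phiInf_two, phiInf_three] at h2 <;> omega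

lemma exists_altLtAt_phiInf_lt (hd : IsStrictAltLyndon d) (hb : ∀ i, d i ≤ 1) {k : ℕ}
    (h : AltLtAt phiInf d k) :
    ∃ e : ℕ → ℕ, (∀ i, e i ≤ 1) ∧ IsStrictAltLyndon e ∧ ∃ m < k, AltLtAt phiInf e m := by
  have hk := hd.four_le_of_altLtAt_phiInf hb h
  have h2 : d 2 = 0 := by rw [← h.1 2 (by omega), phiInf_two]
  have h3 : d 3 = 1 := by rw [← h.1 3 (by omega), phiInf_three]
  have hphi : phiSeq (desubst d) = d := phiSeq_desubst hb (hd.head_eq_one hb) fun q hq hq1 =>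
    ⟨hd.apply_add_two_eq_zero hb h2 hq hq1, hd.apply_add_three_eq_one hb h2 h3 hq hq1⟩
  refine ⟨desubst d, desubst_le_one d, .of_phiSeq (desubst_le_one d) (by rwa [hphi]), ?_⟩
  rcases altLt_trichotomy phiInf (desubst d) with heq | ⟨m, hm⟩ | hgt
  · rw [← heq, phiSeq_phiInf] at hphi
    subst hphi
    exact absurd ⟨k, h⟩ (altLt_irrefl _)
  · have hd' := AltLtAt.phiSeq phiInf_le_one (desubst_le_one d) hm
    rw [phiSeq_phiInf, hphi] at hd'
    have := hd'.index_unique h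
    have := le_blockStart phiInf m
    exact ⟨m, by omega, hm⟩
  · have hlt := altLt_phiSeq (desubst_le_one d) phiInf_le_one hgt
    rw [phiSeq_phiInf, hphi] at hlt
    exact absurd hlt h.not_altLt_swap

lemma not_altLt_phiInf (hd : IsStrictAltLyndon d) (hb : ∀ i, d i ≤ 1) : ¬ altLt phiInf d := by
  rintro ⟨k, hk⟩
  induction k using Nat.strong_induction_on generalizing d with
  | _ k ih =>
    obtain ⟨e, he, hde, m, hm, hme⟩ := hd.exists_altLtAt_phiInf_lt hb hk
    exact ih m hm hde he hme

end IsStrictAltLyndon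

theorem stmt12_general (d : ℕ → ℕ)
    (h : ∀ k : ℕ, 1 ≤ k → altLt d (shiftSeq d k)) :
    altLe d phiInf := by
  by_cases hd0 : d 0 ≤ 1
  · have hb : ∀ i, d i ≤ 1 := fun i => (IsStrictAltLyndon.le_head h i).trans hd0
    rcases altLt_trichotomy d phiInf with heq | hlt | hgt
    · exact .inl heq
    · exact .inr hlt
    · exact absurd hgt (IsStrictAltLyndon.not_altLt_phiInf h hb)
  · exact .inr ⟨0, fun _ hi => absurd hi (Nat.not_lt_zero _), by simp [phiInf_zero]; omega⟩

/-- `φ^∞(1)` is the greatest non-periodic alternate Lyndon word: if `(d_i)` is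
strictly smaller than all of its proper shifts, then `(d_i) ⪯ φ^∞(1)`. -/
theorem stmt12 (d : ℕ → ℕ) (N : ℕ) (hbound : ∀ i, d i ≤ N)
    (h : ∀ k : ℕ, 1 ≤ k → altLt d (shiftSeq d k)) :
    altLe d phiInf :=
  stmt12_general d h
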